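/- arXiv:1002.2271 — 7 statements merged into one kernel-verified Lean document; each statement's English description precedes it below -/
import Mathlib

section
/- For all p, v > 0 and all k ≥ 0, the convolution of the product g_p · H_k^{[p]} with the Gaussian density g_v satisfies (g_p H_k^{[p]}) ⋆ g_v = (p/(p+v))^{k/2} · g_{p+v} · H_k^{[p+v]}. -/
open MeasureTheory Real

/-- Probabilists' Hermite polynomial `H_k(x) = (-1)^k e^{x²/2} (d^k/dx^k) e^{-x²/2}`. -/
noncomputable def hermiteH (k : ℕ) (x : ℝ) : ℝ :=
  (-1 : ℝ) ^ k * Real.exp (x ^ 2 / 2) *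
    iteratedDeriv k (fun y : ℝ => Real.exp (-(y ^ 2) / 2)) x

/-- Centered Gaussian density of variance `p`. -/
noncomputable def gauss (p : ℝ) (x : ℝ) : ℝ :=
  (Real.sqrt (2 * Real.pi * p))⁻¹ * Real.exp (-(x ^ 2) / (2 * p))

/-- Normalized Hermite polynomial adapted to variance `p`:
`H_k^{[p]}(x) = H_k(x/√p)/√(k!)`. -/
noncomputable def hermiteN (p : ℝ) (k : ℕ) (x : ℝ) : ℝ :=
  (Real.sqrt (Nat.factorial k))⁻¹ * hermiteH k (x / Real.sqrt p)

open Filter Topology Polynomial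
open scoped ContDiff

/-! By Rodrigues' formula, `g_p H_k^{[p]}` is `(-√p)^k / √(k!)` times the `k`-th derivative of
`g_p`. All derivatives of `g_p` are bounded, so differentiation under the integral sign moves them
through the convolution with the integrable `g_v`, and `g_p ⋆ g_v = g_{p+v}` by completing the
square. Hence the convolution is `(-√p)^k / √(k!) · g_{p+v}^{(k)}`, and Rodrigues' formula for
`p + v` turns this into `(√p / √(p+v))^k g_{p+v} H_k^{[p+v]}`. -/

namespace Polynomial

lemma tendsto_eval_mul_exp_neg_sq_atTop (P : ℝ[X]) :
    Tendsto (fun x => P.eval x * exp (-x ^ 2 / 2)) atTop (𝓝 0) := by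
  refine squeeze_zero_norm' ?_ (by simpa using P.tendsto_div_exp_atTop.norm)
  filter_upwards [eventually_ge_atTop 2] with x hx
  rw [norm_mul, norm_of_nonneg (exp_pos _).le, Real.norm_eq_abs, div_eq_mul_inv |P.eval x|,
    ← exp_neg]
  gcongr
  nlinarith

lemma isBounded_range_eval_mul_exp_neg_sq (P : ℝ[X]) :
    Bornology.IsBounded (Set.range fun x => P.eval x * exp (-x ^ 2 / 2)) := by
  have hcont : Continuous fun x => P.eval x * exp (-x ^ 2 / 2) := by fun_prop
  refine hcont.isBounded_range_iff_isBigO_atTop_atBot.2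
    ⟨(P.tendsto_eval_mul_exp_neg_sq_atTop).isBigO_one ℝ, ?_⟩
  have h := ((P.comp (-X)).tendsto_eval_mul_exp_neg_sq_atTop.comp tendsto_neg_atBot_atTop)
  simp only [Function.comp_def, eval_comp, eval_neg, eval_X, neg_neg, even_two.neg_pow] at h
  exact h.isBigO_one ℝ

end Polynomial

section ConvolutionDeriv

variable {f g : ℝ → ℝ}

lemma hasDerivAt_integral_comp_sub_mul {f' : ℝ → ℝ} {M₀ M₁ : ℝ}
    (hf : ∀ u, HasDerivAt f (f' u) u) (hf_le : ∀ u, |f u| ≤ M₀)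
    (hf'_le : ∀ u, |f' u| ≤ M₁)
    (hg : Integrable g) (x : ℝ) :
    HasDerivAt (fun y => ∫ s, f (y - s) * g s) (∫ s, f' (x - s) * g s) x := by
  have hf_cont : Continuous f := continuous_iff_continuousAt.2 fun u => (hf u).continuousAt
  have hf'_meas : Measurable f' := by
    have : deriv f = f' := funext fun u => (hf u).deriv
    exact this ▸ measurable_deriv f
  refine (hasDerivAt_integral_of_dominated_loc_of_deriv_le (bound := fun s => M₁ * |g s|)
    (F' := fun y s => f' (y - s) * g s) Filter.univ_mem ?_ ?_ ?_ ?_ (hg.abs.const_mul M₁) ?_).2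
  · exact Eventually.of_forall fun y =>
      ((hf_cont.comp (continuous_sub_left y)).aestronglyMeasurable).mul hg.aestronglyMeasurable
  · exact hg.bdd_mul (hf_cont.comp (continuous_sub_left x)).aestronglyMeasurable
      (Eventually.of_forall fun s => hf_le (x - s))
  · exact ((hf'_meas.comp (measurable_const_sub x)).aestronglyMeasurable).mul
      hg.aestronglyMeasurable
  · refine Eventually.of_forall fun s y _ => ?_
    rw [norm_mul, Real.norm_eq_abs, Real.norm_eq_abs]
    exact mul_le_mul_of_nonneg_right (hf'_le _) (abs_nonneg _)
  · refine Eventually.of_forall fun s y _ => ?_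
    simpa using ((hf (y - s)).comp y ((hasDerivAt_id y).sub_const s)).mul_const (g s)

lemma iteratedDeriv_integral_comp_sub_mul (hf : ContDiff ℝ ∞ f)
    (hf_bdd : ∀ n, ∃ M, ∀ u, |iteratedDeriv n f u| ≤ M) (hg : Integrable g) (n : ℕ) :
    iteratedDeriv n (fun y => ∫ s, f (y - s) * g s) =
      fun y => ∫ s, iteratedDeriv n f (y - s) * g s := by
  induction n with
  | zero => simp
  | succ n ih =>
    obtain ⟨M₀, hM₀⟩ := hf_bdd n
    obtain ⟨M₁, hM₁⟩ := hf_bdd (n + 1)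
    have hderiv : ∀ u, HasDerivAt (iteratedDeriv n f) (iteratedDeriv (n + 1) f u) u := fun u => by
      rw [iteratedDeriv_succ]
      exact (hf.differentiable_iteratedDeriv n
        (by exact_mod_cast WithTop.coe_lt_top _) u).hasDerivAt
    rw [iteratedDeriv_succ, ih]
    exact funext fun x => (hasDerivAt_integral_comp_sub_mul hderiv hM₀ hM₁ hg x).deriv

end ConvolutionDeriv

section Gaussian

variable {p v : ℝ}

lemma contDiff_gauss (p : ℝ) : ContDiff ℝ ∞ (gauss p) := by
  unfold gauss; fun_prop

lemma gauss_eq_exp_neg_mul_sq (p : ℝ) :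
    gauss p = fun x => (√(2 * π * p))⁻¹ * exp (-(2 * p)⁻¹ * x ^ 2) := by
  funext x; rw [gauss]; congr 2; field_simp

lemma integrable_gauss (hp : 0 < p) : Integrable (gauss p) := by
  rw [gauss_eq_exp_neg_mul_sq]
  exact (integrable_exp_neg_mul_sq (by positivity)).const_mul _

lemma integral_gauss (hp : 0 < p) : ∫ x, gauss p x = 1 := by
  rw [gauss_eq_exp_neg_mul_sq, integral_const_mul, integral_gaussian, ← sqrt_inv,
    ← Real.sqrt_mul' _ (by positivity), sqrt_eq_one]
  field_simp

lemma gauss_mul_gauss (hp : 0 < p) (hv : 0 < v) (x s : ℝ) :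
    gauss p (x - s) * gauss v s =
      gauss (p + v) x * gauss (p * v / (p + v)) (s - v * x / (p + v)) := by
  have hpv : 0 < p + v := by linarith
  have hconst : (√(2 * π * p))⁻¹ * (√(2 * π * v))⁻¹ =
      (√(2 * π * (p + v)))⁻¹ * (√(2 * π * (p * v / (p + v))))⁻¹ := by
    rw [← mul_inv, ← mul_inv, ← Real.sqrt_mul (by positivity),
      ← Real.sqrt_mul (by positivity)]
    field_simp
  have hexp : -(x - s) ^ 2 / (2 * p) + -s ^ 2 / (2 * v) =
      -x ^ 2 / (2 * (p + v)) + -(s - v * x / (p + v)) ^ 2 / (2 * (p * v / (p + v))) := by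
    field_simp; ring
  simp only [gauss]
  rw [mul_mul_mul_comm, ← exp_add, hconst, hexp, exp_add]
  ring

lemma integral_gauss_comp_sub_mul_gauss (hp : 0 < p) (hv : 0 < v) (x : ℝ) :
    ∫ s, gauss p (x - s) * gauss v s = gauss (p + v) x := by
  have hw : 0 < p * v / (p + v) := by positivity
  simp_rw [gauss_mul_gauss hp hv, integral_const_mul, integral_sub_right_eq_self
    (gauss (p * v / (p + v))), integral_gauss hw, mul_one]

lemma iteratedDeriv_exp_neg_sq_div_two (n : ℕ) (x : ℝ) :
    iteratedDeriv n (fun y => exp (-y ^ 2 / 2)) x =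
      (-1) ^ n * aeval x (hermite n) * exp (-x ^ 2 / 2) := by
  simp_rw [neg_div]
  rw [iteratedDeriv_eq_iterate, deriv_gaussian_eq_hermite_mul_gaussian]

lemma exists_bound_iteratedDeriv_exp_neg_sq_div_two (n : ℕ) :
    ∃ M, ∀ x, |iteratedDeriv n (fun y => exp (-y ^ 2 / 2)) x| ≤ M := by
  obtain ⟨M, hM⟩ := isBounded_iff_forall_norm_le.1
    ((hermite n).map (Int.castRingHom ℝ)).isBounded_range_eval_mul_exp_neg_sq
  refine ⟨M, fun x => ?_⟩
  rw [iteratedDeriv_exp_neg_sq_div_two, mul_assoc, abs_mul, abs_neg_one_pow, one_mul,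
    aeval_def, eval₂_eq_eval_map]
  exact hM _ ⟨x, rfl⟩

lemma iteratedDeriv_gauss (hp : 0 < p) (n : ℕ) (x : ℝ) :
    iteratedDeriv n (gauss p) x =
      (√(2 * π * p))⁻¹ * (√p)⁻¹ ^ n *
        iteratedDeriv n (fun y => exp (-y ^ 2 / 2)) ((√p)⁻¹ * x) := by
  have hgauss : gauss p = fun x => (√(2 * π * p))⁻¹ * exp (-((√p)⁻¹ * x) ^ 2 / 2) := by
    funext x
    rw [gauss, mul_pow, inv_pow, sq_sqrt hp.le]
    congr 2
    field_simp
  have hG : ContDiff ℝ n fun y => exp (-y ^ 2 / 2) := by fun_prop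
  have hGc : ContDiff ℝ n fun x => exp (-((√p)⁻¹ * x) ^ 2 / 2) := by fun_prop
  rw [hgauss, iteratedDeriv_const_mul _ hGc.contDiffAt, iteratedDeriv_comp_const_mul hG]
  exact (mul_assoc _ _ _).symm

lemma exists_bound_iteratedDeriv_gauss (hp : 0 < p) (n : ℕ) :
    ∃ M, ∀ x, |iteratedDeriv n (gauss p) x| ≤ M := by
  obtain ⟨M, hM⟩ := exists_bound_iteratedDeriv_exp_neg_sq_div_two n
  refine ⟨(√(2 * π * p))⁻¹ * (√p)⁻¹ ^ n * M, fun x => ?_⟩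
  rw [iteratedDeriv_gauss hp, abs_mul, abs_of_nonneg (by positivity)]
  exact mul_le_mul_of_nonneg_left (hM _) (by positivity)

lemma gauss_mul_hermiteN (hp : 0 < p) (n : ℕ) (x : ℝ) :
    gauss p x * hermiteN p n x =
      (-√p) ^ n / √(n.factorial : ℝ) * iteratedDeriv n (gauss p) x := by
  have hexp : exp (-x ^ 2 / (2 * p)) * exp ((x / √p) ^ 2 / 2) = 1 := by
    rw [← exp_add, div_pow, sq_sqrt hp.le, ← exp_zero]
    congr 1
    field_simp
    ring
  have hpow : √p ^ n * (√p ^ n)⁻¹ = 1 := mul_inv_cancel₀ (by positivity)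
  rw [iteratedDeriv_gauss hp, hermiteN, hermiteH, gauss, ← div_eq_inv_mul x, neg_pow, inv_pow]
  linear_combination ((-1) ^ n * (√(2 * π * p))⁻¹ * (√(n.factorial : ℝ))⁻¹ *
    iteratedDeriv n (fun y => exp (-y ^ 2 / 2)) (x / √p)) * (hexp - hpow)

lemma integral_iteratedDeriv_gauss_comp_sub_mul_gauss (hp : 0 < p) (hv : 0 < v) (n : ℕ)
    (x : ℝ) :
    ∫ s, iteratedDeriv n (gauss p) (x - s) * gauss v s = iteratedDeriv n (gauss (p + v)) x := by
  rw [← congrFun (iteratedDeriv_integral_comp_sub_mul (contDiff_gauss p)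
    (exists_bound_iteratedDeriv_gauss hp) (integrable_gauss hv) n) x]
  simp_rw [integral_gauss_comp_sub_mul_gauss hp hv]

end Gaussian

/-- `(g_p H_k^{[p]}) ⋆ g_v = (p/(p+v))^{k/2} g_{p+v} H_k^{[p+v]}`. -/
theorem gauss_hermite_conv (p v : ℝ) (hp : 0 < p) (hv : 0 < v) (k : ℕ) (x : ℝ) :
    ∫ t, gauss p t * hermiteN p k t * gauss v (x - t) =
      (p / (p + v)) ^ ((k : ℝ) / 2) * (gauss (p + v) x * hermiteN (p + v) k x) := by
  have hpv : 0 < p + v := by linarith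
  have hconv : ∫ t, iteratedDeriv k (gauss p) t * gauss v (x - t) =
      iteratedDeriv k (gauss (p + v)) x := by
    rw [← integral_sub_left_eq_self _ volume x]
    simpa only [sub_sub_cancel] using integral_iteratedDeriv_gauss_comp_sub_mul_gauss hp hv k x
  have hconst : (√p / √(p + v)) ^ k * (-√(p + v)) ^ k = (-√p) ^ k := by
    rw [← mul_pow, mul_neg, div_mul_cancel₀ _ (by positivity)]
  simp_rw [gauss_mul_hermiteN hp, gauss_mul_hermiteN hpv, mul_assoc, integral_const_mul, hconv]
  rw [rpow_div_two_eq_sqrt _ (by positivity), rpow_natCast, sqrt_div hp.le, ← hconst]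
  ring
end

section
/- For a, b > 0, the product-convolution of first Hermite functions satisfies (g_a H_1^{[a]}) ⋆ (g_b H_1^{[b]}) = (√(2ab)/(a+b)) · g_{a+b} · H_2^{[a+b]}. -/
open MeasureTheory Real

/-!
Completing the square gives `g_a(t) g_b(x - t) = g_{a+b}(x) g_c(t - m)` with `c = ab/(a+b)` and
`m = ax/(a+b)`. Since `H_1^{[a]}(t) H_1^{[b]}(x - t) = t(x - t)/√(ab)`, the convolution is
`g_{a+b}(x)/√(ab)` times the expectation of `t(x - t)` under `N(m, c)`, which is
`m(x - m) - c = c (x²/(a+b) - 1)` by the mean and variance of the Gaussian.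
-/

open Polynomial ProbabilityTheory
open scoped NNReal

lemma hermiteH_eq_aeval_hermite (k : ℕ) (x : ℝ) : hermiteH k x = aeval x (hermite k) := by
  simp only [hermiteH, hermite_eq_deriv_gaussian', iteratedDeriv_eq_iterate, neg_div]
  ring

lemma hermiteN_one (p x : ℝ) : hermiteN p 1 x = x / √p := by
  simp [hermiteN, hermiteH_eq_aeval_hermite]

lemma hermite_two : hermite 2 = X ^ 2 - 1 := by
  simp [hermite_succ, sq]

lemma hermiteN_two {p : ℝ} (hp : 0 ≤ p) (x : ℝ) : hermiteN p 2 x = (x ^ 2 / p - 1) / √2 := by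
  rw [hermiteN, hermiteH_eq_aeval_hermite, hermite_two, Nat.factorial_two, Nat.cast_ofNat]
  simp only [map_sub, map_pow, aeval_X, map_one]
  rw [div_pow, Real.sq_sqrt hp]
  ring

lemma gauss_mul_gauss_sub {a b : ℝ} (ha : 0 < a) (hb : 0 < b) (x t : ℝ) :
    gauss a t * gauss b (x - t) =
      gauss (a + b) x * gauss (a * b / (a + b)) (t - a * x / (a + b)) := by
  have hnorm : (√(2 * π * a))⁻¹ * (√(2 * π * b))⁻¹ =
      (√(2 * π * (a + b)))⁻¹ * (√(2 * π * (a * b / (a + b))))⁻¹ := by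
    rw [← mul_inv, ← mul_inv, ← Real.sqrt_mul (by positivity), ← Real.sqrt_mul (by positivity)]
    congr 2
    field_simp
  have hexp : -t ^ 2 / (2 * a) + -(x - t) ^ 2 / (2 * b) =
      -x ^ 2 / (2 * (a + b)) + -(t - a * x / (a + b)) ^ 2 / (2 * (a * b / (a + b))) := by
    field_simp
    ring
  calc gauss a t * gauss b (x - t)
      = (√(2 * π * a))⁻¹ * (√(2 * π * b))⁻¹ *
          rexp (-t ^ 2 / (2 * a) + -(x - t) ^ 2 / (2 * b)) := by
        rw [gauss, gauss, Real.exp_add]; ring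
    _ = _ := by
        rw [hnorm, hexp, Real.exp_add, gauss, gauss]; ring

lemma gauss_sub_eq_gaussianPDFReal (v : ℝ≥0) (m t : ℝ) :
    gauss v (t - m) = gaussianPDFReal m v t := by
  simp [gauss, gaussianPDFReal]

lemma integral_sq_gaussianReal (m : ℝ) (v : ℝ≥0) : ∫ t, t ^ 2 ∂gaussianReal m v = v + m ^ 2 := by
  have := variance_eq_sub (memLp_id_gaussianReal (μ := m) (v := v) 2)
  simp only [variance_id_gaussianReal, id_eq, integral_id_gaussianReal, Pi.pow_apply] at this
  linarith

lemma integral_gaussianPDFReal_mul_mul_sub (m : ℝ) {v : ℝ≥0} (hv : v ≠ 0) (x : ℝ) :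
    ∫ t, gaussianPDFReal m v t * (t * (x - t)) = m * (x - m) - v := by
  have hL2 : MemLp id 2 (gaussianReal m v) := memLp_id_gaussianReal 2
  have hint : Integrable (fun t ↦ x * t) (gaussianReal m v) :=
    (hL2.integrable one_le_two).const_mul x
  have hint_sq : Integrable (fun t : ℝ ↦ t ^ 2) (gaussianReal m v) := hL2.integrable_sq
  calc ∫ t, gaussianPDFReal m v t * (t * (x - t))
      = ∫ t, (x * t - t ^ 2) ∂gaussianReal m v := by
        rw [integral_gaussianReal_eq_integral_smul hv]
        congr with t
        simp only [smul_eq_mul]; ring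
    _ = m * (x - m) - v := by
        rw [integral_sub hint hint_sq,
          integral_const_mul, integral_id_gaussianReal, integral_sq_gaussianReal]
        ring

lemma integral_gauss_sub_mul_mul_sub {v : ℝ} (hv : 0 < v) (m x : ℝ) :
    ∫ t, gauss v (t - m) * (t * (x - t)) = m * (x - m) - v := by
  lift v to ℝ≥0 using hv.le
  simp_rw [gauss_sub_eq_gaussianPDFReal]
  exact integral_gaussianPDFReal_mul_mul_sub m (by exact_mod_cast hv.ne') x

/-- `(g_a H_1^{[a]}) ⋆ (g_b H_1^{[b]}) = (√(2ab)/(a+b)) g_{a+b} H_2^{[a+b]}`. -/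
theorem hermite1_conv (a b : ℝ) (ha : 0 < a) (hb : 0 < b) (x : ℝ) :
    ∫ t, (gauss a t * hermiteN a 1 t) * (gauss b (x - t) * hermiteN b 1 (x - t)) =
      (Real.sqrt (2 * a * b) / (a + b)) * (gauss (a + b) x * hermiteN (a + b) 2 x) := by
  have hab : 0 < a + b := by positivity
  have hintegrand (t : ℝ) :
      (gauss a t * hermiteN a 1 t) * (gauss b (x - t) * hermiteN b 1 (x - t)) =
        (√a * √b)⁻¹ * gauss (a + b) x *
          (gauss (a * b / (a + b)) (t - a * x / (a + b)) * (t * (x - t))) := by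
    rw [hermiteN_one, hermiteN_one, mul_mul_mul_comm, gauss_mul_gauss_sub ha hb]
    field_simp
  simp_rw [hintegrand]
  rw [integral_const_mul, integral_gauss_sub_mul_mul_sub (by positivity), hermiteN_two hab.le,
    Real.sqrt_mul (by positivity), Real.sqrt_mul zero_le_two]
  field_simp
  rw [Real.sq_sqrt ha.le, Real.sq_sqrt hb.le]
  ring
end

section
/- Define F_k(a,p) = (a^2/(p a^2 + 1))^k − (a^k − 1)^2/(p a^2 + p + 1)^k for a, p > 0 and integer k ≥ 2. Then for each fixed p > 0 and k ≥ 2, the function a ↦ F_k(a,p) on (0,∞) has exactly one zero a₀, is negative on (0, a₀), and is positive on (a₀, ∞). -/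
/-!
Since `a² / (p a² + 1) = g(a) / (p a² + p + 1)` with `g(a) = a² + 1 - 1 / (p a² + 1)`,
the sign of `F_k(a, p)` is that of `N(a) = g(a)^k - (a^k - 1)^2`. On `[0, 1]` the first term
increases and the second decreases, so `N` is strictly increasing there, from `N(0) = -1`;
for `a ≥ 1` we have `0 ≤ a^k - 1 < a^k` and `a² < g(a)`, so `N(a) > 0`. The intermediate
value theorem on `[0, 1]` then produces the unique sign change.
-/

/-- Second-order sum-rate gain of Hermite-`k` perturbations on the symmetric
Gaussian interference channel. -/
noncomputable def Fgain (k : ℕ) (a p : ℝ) : ℝ :=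
  (a ^ 2 / (p * a ^ 2 + 1)) ^ k - (a ^ k - 1) ^ 2 / (p * a ^ 2 + p + 1) ^ k

open Set

theorem exists_sign_change_of_strictMonoOn {α : Type*} [TopologicalSpace α]
    [ConditionallyCompleteLinearOrder α] [OrderTopology α] [DenselyOrdered α]
    {f : α → ℝ} {c b : α} (hcb : c ≤ b) (hf : ContinuousOn f (Icc c b))
    (hmono : StrictMonoOn f (Icc c b)) (hc : f c < 0) (hpos : ∀ a, b ≤ a → 0 < f a) :
    ∃ a₀, c < a₀ ∧ f a₀ = 0 ∧ (∀ a, c ≤ a → a < a₀ → f a < 0) ∧ ∀ a, a₀ < a → 0 < f a := by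
  obtain ⟨a₀, ⟨hca₀, ha₀b⟩, hroot⟩ :=
    intermediate_value_Icc hcb hf ⟨hc.le, (hpos b le_rfl).le⟩
  have ha₀ : a₀ ∈ Icc c b := ⟨hca₀, ha₀b⟩
  refine ⟨a₀, lt_of_le_of_ne hca₀ (by rintro rfl; linarith), hroot, ?_, ?_⟩
  · intro a hca ha
    rw [← hroot]
    exact hmono ⟨hca, (ha.trans_le ha₀b).le⟩ ha₀ ha
  · intro a ha
    rcases le_or_gt b a with hba | hab
    · exact hpos a hba
    · rw [← hroot]
      exact hmono ha₀ ⟨hca₀.trans ha.le, hab.le⟩ ha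

noncomputable def gainBase (p a : ℝ) : ℝ :=
  a ^ 2 + 1 - (p * a ^ 2 + 1)⁻¹

noncomputable def gainNumerator (k : ℕ) (p a : ℝ) : ℝ :=
  gainBase p a ^ k - (a ^ k - 1) ^ 2

section

variable {k : ℕ} {p : ℝ}

theorem Fgain_eq_gainNumerator_div (hp : 0 ≤ p) (a : ℝ) :
    Fgain k a p = gainNumerator k p a / (p * a ^ 2 + p + 1) ^ k := by
  have h₁ : p * a ^ 2 + 1 ≠ 0 := by positivity
  have h₂ : p * a ^ 2 + p + 1 ≠ 0 := by positivity
  have hbase : a ^ 2 / (p * a ^ 2 + 1) = gainBase p a / (p * a ^ 2 + p + 1) := by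
    rw [gainBase, div_eq_div_iff h₁ h₂]
    field_simp
    ring
  rw [Fgain, gainNumerator, hbase, div_pow, sub_div]

theorem continuous_gainNumerator (hp : 0 ≤ p) : Continuous (gainNumerator k p) := by
  have hden : ∀ a : ℝ, p * a ^ 2 + 1 ≠ 0 := fun a => by positivity
  unfold gainNumerator gainBase
  fun_prop (disch := exact hden _)

theorem gainBase_zero : gainBase p 0 = 0 := by
  simp [gainBase]

theorem strictMonoOn_gainBase (hp : 0 ≤ p) : StrictMonoOn (gainBase p) (Ici 0) := by
  intro a ha b hb hab
  have hsq : a ^ 2 < b ^ 2 := pow_lt_pow_left₀ hab ha two_ne_zero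
  have hinv : (p * b ^ 2 + 1)⁻¹ ≤ (p * a ^ 2 + 1)⁻¹ :=
    inv_anti₀ (by positivity) (by gcongr)
  simp only [gainBase]
  linarith

theorem sq_lt_gainBase (hp : 0 < p) {a : ℝ} (ha : a ≠ 0) : a ^ 2 < gainBase p a := by
  have hpa : 0 < p * a ^ 2 := by positivity
  have hinv : (p * a ^ 2 + 1)⁻¹ < 1 := inv_lt_one_of_one_lt₀ (by linarith)
  simp only [gainBase]
  linarith

theorem gainNumerator_zero (hk : k ≠ 0) : gainNumerator k p 0 = -1 := by
  simp [gainNumerator, gainBase_zero, hk]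

theorem strictMonoOn_gainNumerator (hk : k ≠ 0) (hp : 0 ≤ p) :
    StrictMonoOn (gainNumerator k p) (Icc 0 1) := by
  intro a ⟨ha0, _⟩ b ⟨hb0, hb1⟩ hab
  have hbase : gainBase p a ^ k < gainBase p b ^ k := by
    have hg := strictMonoOn_gainBase hp (mem_Ici.2 ha0) (mem_Ici.2 hb0) hab
    have hg0 : 0 ≤ gainBase p a := by
      rw [← gainBase_zero (p := p)]
      exact (strictMonoOn_gainBase hp).monotoneOn self_mem_Ici (mem_Ici.2 ha0) ha0
    exact pow_lt_pow_left₀ hg hg0 hk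
  have hpow : a ^ k < b ^ k := pow_lt_pow_left₀ hab ha0 hk
  have hbk : b ^ k ≤ 1 := pow_le_one₀ hb0 hb1
  have hak : 0 ≤ a ^ k := by positivity
  have hsq : (b ^ k - 1) ^ 2 < (a ^ k - 1) ^ 2 := by nlinarith
  simp only [gainNumerator]
  linarith

theorem gainNumerator_pos_of_one_le (hk : k ≠ 0) (hp : 0 < p) {a : ℝ} (ha : 1 ≤ a) :
    0 < gainNumerator k p a := by
  have hak : 1 ≤ a ^ k := one_le_pow₀ ha
  have hsq : (a ^ k - 1) ^ 2 < (a ^ 2) ^ k := by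
    rw [← pow_mul, mul_comm, pow_mul]
    exact pow_lt_pow_left₀ (by linarith) (by linarith) two_ne_zero
  have hbase : (a ^ 2) ^ k < gainBase p a ^ k :=
    pow_lt_pow_left₀ (sq_lt_gainBase hp (by positivity)) (by positivity) hk
  simp only [gainNumerator]
  linarith

end

/-- For each `p > 0` and `k ≥ 2`, `a ↦ F_k(a,p)` has a unique positive root `a₀`,
is negative on `(0, a₀)` and positive on `(a₀, ∞)`. -/
theorem Fgain_unique_root (k : ℕ) (hk : 2 ≤ k) (p : ℝ) (hp : 0 < p) :
    ∃ a₀ : ℝ, 0 < a₀ ∧ Fgain k a₀ p = 0 ∧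
      (∀ a : ℝ, 0 < a → a < a₀ → Fgain k a p < 0) ∧
      (∀ a : ℝ, a₀ < a → 0 < Fgain k a p) := by
  have hk0 : k ≠ 0 := by omega
  obtain ⟨a₀, ha₀, hroot, hneg, hpos⟩ := exists_sign_change_of_strictMonoOn zero_le_one
    (continuous_gainNumerator hp.le).continuousOn (strictMonoOn_gainNumerator hk0 hp.le)
    (by rw [gainNumerator_zero hk0]; norm_num)
    (fun a ha => gainNumerator_pos_of_one_le hk0 hp ha)
  have hden : ∀ a : ℝ, 0 < (p * a ^ 2 + p + 1) ^ k := fun a => by positivity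
  simp only [Fgain_eq_gainNumerator_div hp.le]
  exact ⟨a₀, ha₀, by rw [hroot, zero_div],
    fun a ha hlt => div_neg_of_neg_of_pos (hneg a ha.le hlt) (hden a),
    fun a hlt => div_pos (hpos a hlt) (hden a)⟩
end

section
/- For all a, p > 0, substituting k = 1 into the formula F_k(a,p) = (a^2/(pa^2+1))^k − (a^k−1)^2/(pa^2+p+1)^k gives an expression F_1(a,p) = a^2/(pa^2+1) − (a−1)^2/(pa^2+p+1) that is strictly positive if and only if p a^3 + a − 1/2 > 0. -/
/-- Substituting `k = 1` in the formula for `F_k(a,p)` gives an expression that is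
strictly positive iff `p a³ + a − 1/2 > 0` (the complement of the noisy-interference regime). -/
theorem Fgain_one_pos_iff (a p : ℝ) (ha : 0 < a) (hp : 0 < p) :
    0 < Fgain 1 a p ↔ 0 < p * a ^ 3 + a - 1 / 2 := by
  have h1 : (0:ℝ) < p * a ^ 2 + 1 := by positivity
  have h2 : (0:ℝ) < p * a ^ 2 + p + 1 := by positivity
  have hF : Fgain 1 a p =
      (2 * (p * a ^ 3 + a - 1 / 2)) / ((p * a ^ 2 + 1) * (p * a ^ 2 + p + 1)) := by
    simp only [Fgain, pow_one]
    field_simp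
    ring
  rw [hF]
  constructor
  · intro h
    have := (div_pos_iff.mp h)
    rcases this with ⟨hn, _⟩ | ⟨_, hd⟩
    · linarith
    · nlinarith
  · intro h
    apply div_pos (by linarith) (by positivity)
end

section
/- For p = 1, the four threshold functions satisfy T₁ < T₂ < T₃, where T₁ is the unique positive root of a^3 + a − 1/2 = 0, T₂ is the unique positive root of a ↦ F_2(a,1), and T₃ is the unique positive root of a ↦ F_3(a,1). Numerically T₁ ≈ 0.424, T₂ ≈ 0.605, T₃ ≈ 0.680; in particular 0.42 < T₁ < 0.43 < 0.60 < T₂ < 0.61 < 0.67 < T₃ < 0.69. -/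
noncomputable def gainRatio (a p : ℝ) : ℝ := a ^ 2 * (p * a ^ 2 + p + 1) / (p * a ^ 2 + 1)

section GainRatio

variable {k : ℕ} {a b p : ℝ}

theorem fgain_eq_zero_iff (hp : 0 ≤ p) :
    Fgain k a p = 0 ↔ gainRatio a p ^ k = (a ^ k - 1) ^ 2 := by
  have h₁ : 0 < p * a ^ 2 + 1 := by positivity
  have h₂ : 0 < p * a ^ 2 + p + 1 := by positivity
  rw [Fgain, gainRatio, sub_eq_zero, div_pow, div_pow, div_eq_div_iff (by positivity) (by positivity),
    div_eq_iff (by positivity), mul_pow]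

theorem gainRatio_nonneg (hp : 0 ≤ p) : 0 ≤ gainRatio a p := by
  unfold gainRatio
  positivity

theorem sq_le_gainRatio (hp : 0 ≤ p) : a ^ 2 ≤ gainRatio a p := by
  rw [gainRatio, le_div_iff₀ (by positivity)]
  nlinarith [sq_nonneg a, mul_nonneg hp (sq_nonneg a)]

theorem gainRatio_le_gainRatio (hp : 0 ≤ p) (ha : 0 ≤ a) (hab : a ≤ b) :
    gainRatio a p ≤ gainRatio b p := by
  have hsq : a ^ 2 ≤ b ^ 2 := pow_le_pow_left₀ ha hab 2
  have hpos : 0 ≤ p ^ 2 * a ^ 2 * b ^ 2 + p * (a ^ 2 + b ^ 2) + p + 1 := by positivity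
  rw [gainRatio, gainRatio, div_le_div_iff₀ (by positivity) (by positivity)]
  -- the difference of the two sides is `(b² - a²) (p² a² b² + p (a² + b²) + p + 1)`
  nlinarith [mul_nonneg (sub_nonneg.2 hsq) hpos]

theorem pow_sub_one_sq_lt_gainRatio_pow (hp : 0 ≤ p) (ha : 1 ≤ a) :
    (a ^ k - 1) ^ 2 < gainRatio a p ^ k := by
  have hak : 1 ≤ a ^ k := one_le_pow₀ ha
  calc (a ^ k - 1) ^ 2 < (a ^ 2) ^ k := by rw [← pow_mul, mul_comm, pow_mul]; nlinarith
    _ ≤ gainRatio a p ^ k := pow_le_pow_left₀ (by positivity) (sq_le_gainRatio hp) k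

theorem lt_of_fgain_eq_zero_of_gainRatio_lt {lo : ℝ} (hp : 0 ≤ p) (ha : 0 ≤ a)
    (h : Fgain k a p = 0) (hlo : lo ≤ 1) (hlt : gainRatio lo p ^ k < (1 - lo ^ k) ^ 2) :
    lo < a := by
  by_contra! hal
  have hk : a ^ k ≤ lo ^ k := pow_le_pow_left₀ ha hal k
  have hlok : lo ^ k ≤ 1 := pow_le_one₀ (ha.trans hal) hlo
  have := calc
    (1 - lo ^ k) ^ 2 ≤ (a ^ k - 1) ^ 2 := by nlinarith [pow_nonneg ha k]
    _ = gainRatio a p ^ k := ((fgain_eq_zero_iff hp).1 h).symm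
    _ ≤ gainRatio lo p ^ k :=
      pow_le_pow_left₀ (gainRatio_nonneg hp) (gainRatio_le_gainRatio hp ha hal) k
  linarith

theorem lt_of_fgain_eq_zero_of_lt_gainRatio {hi : ℝ} (hp : 0 ≤ p) (h : Fgain k a p = 0)
    (hhi : 0 ≤ hi) (hlt : (1 - hi ^ k) ^ 2 < gainRatio hi p ^ k) : a < hi := by
  have hroot := (fgain_eq_zero_iff hp).1 h
  by_contra! hia
  rcases le_total a 1 with ha1 | ha1
  · have hk : hi ^ k ≤ a ^ k := pow_le_pow_left₀ hhi hia k
    have hak : a ^ k ≤ 1 := pow_le_one₀ (hhi.trans hia) ha1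
    have := calc
      gainRatio hi p ^ k ≤ gainRatio a p ^ k :=
        pow_le_pow_left₀ (gainRatio_nonneg hp) (gainRatio_le_gainRatio hp hhi hia) k
      _ = (a ^ k - 1) ^ 2 := hroot
      _ ≤ (1 - hi ^ k) ^ 2 := by nlinarith [pow_nonneg hhi k]
    linarith
  · exact (pow_sub_one_sq_lt_gainRatio_pow hp ha1).ne' hroot

end GainRatio

theorem strictMono_cubic_threshold : StrictMono (fun a : ℝ => a ^ 3 + a - 1 / 2) :=
  ((Odd.strictMono_pow (by decide)).add strictMono_id).add_const _

/-- For `p = 1`: the positive root `T₁` of `a³ + a − 1/2`, the positive root `T₂` of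
`F₂(·,1)` and the positive root `T₃` of `F₃(·,1)` satisfy
`0.42 < T₁ < 0.43 < 0.60 < T₂ < 0.61 < 0.67 < T₃ < 0.69`; in particular `T₁ < T₂ < T₃`. -/
theorem threshold_ordering (T₁ T₂ T₃ : ℝ)
    (h₁ : 0 < T₁ ∧ T₁ ^ 3 + T₁ - 1 / 2 = 0)
    (h₂ : 0 < T₂ ∧ Fgain 2 T₂ 1 = 0)
    (h₃ : 0 < T₃ ∧ Fgain 3 T₃ 1 = 0) :
    0.42 < T₁ ∧ T₁ < 0.43 ∧ 0.60 < T₂ ∧ T₂ < 0.61 ∧ 0.67 < T₃ ∧ T₃ < 0.69 := by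
  refine ⟨?_, ?_, ?_, ?_, ?_, ?_⟩
  · rw [← strictMono_cubic_threshold.lt_iff_lt]; norm_num [h₁.2]
  · rw [← strictMono_cubic_threshold.lt_iff_lt]; norm_num [h₁.2]
  · exact lt_of_fgain_eq_zero_of_gainRatio_lt zero_le_one h₂.1.le h₂.2 (by norm_num)
      (by norm_num [gainRatio])
  · exact lt_of_fgain_eq_zero_of_lt_gainRatio zero_le_one h₂.2 (by norm_num)
      (by norm_num [gainRatio])
  · exact lt_of_fgain_eq_zero_of_gainRatio_lt zero_le_one h₃.1.le h₃.2 (by norm_num)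
      (by norm_num [gainRatio])
  · exact lt_of_fgain_eq_zero_of_lt_gainRatio zero_le_one h₃.2 (by norm_num)
      (by norm_num [gainRatio])
end

section
/- There exist h > 0, u > 0, and an integer k ≥ 3 such that G(h,u,k) := (1+h^k)^2/(1+h^2+u)^k − 1/(1+h^2+u)^k − (h^2/(h^2+u))^k > 0. In particular this holds for suitable (h,u,k), disproving that the left side is always nonpositive. -/
/-- Local Hermite-perturbation gain for the strong Shamai–Laroia conjecture,
at inverse SNR `u`. -/
noncomputable def Ggain (h u : ℝ) (k : ℕ) : ℝ :=
  (1 + h ^ k) ^ 2 / (1 + h ^ 2 + u) ^ k - 1 / (1 + h ^ 2 + u) ^ k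
    - (h ^ 2 / (h ^ 2 + u)) ^ k

theorem Ggain_half_one_three : Ggain (1 / 2) 1 3 = 1396 / 91125 := by
  norm_num [Ggain]

/-- There exist `h > 0`, `u > 0` and `k ≥ 3` with `G(h,u,k) > 0`,
disproving the strong Shamai–Laroia conjecture. -/
theorem exists_Ggain_pos :
    ∃ (h u : ℝ) (k : ℕ), 0 < h ∧ 0 < u ∧ 3 ≤ k ∧ 0 < Ggain h u k :=
  ⟨1 / 2, 1, 3, by norm_num, one_pos, le_rfl, by rw [Ggain_half_one_three]; norm_num⟩
end

section
/- For all a, p > 0 with p a^3 + a − 1/2 > 0 and a < 1, if additionally F_3(a,p) = (a²/(pa²+1))³ − (a³−1)²/(pa²+p+1)³ > 0, then a > T₁(p) where T₁(p) is the unique positive root of p a³ + a − 1/2; i.e. the unique positive root of F_3(·,p) is strictly greater than T₁(p) for every p > 0. -/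
/-- `F₃(a,p) = (a²/(pa²+1))³ − (a³−1)²/(pa²+p+1)³`. -/
noncomputable def F3 (a p : ℝ) : ℝ :=
  (a ^ 2 / (p * a ^ 2 + 1)) ^ 3 - (a ^ 3 - 1) ^ 2 / (p * a ^ 2 + p + 1) ^ 3

/-!
Below the threshold, i.e. when `p a³ + a ≤ 1/2`, the identity
`(1 - a)²(pa² + 1) - a²(pa² + p + 1) = 1 - 2(p a³ + a)` gives
`a²/(pa² + 1) ≤ (1 - a)²/(pa² + p + 1)`, and `(1 - a)³ < 1 - a³` on `(0, 1)` then makes `F₃(a,p)`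
negative. Since `a ↦ p a³ + a` is increasing on `[0, ∞)`, a positive `a` with `F₃(a,p) ≥ 0` lies
above `T₁(p)`.
-/

lemma cubic_add_le_cubic_add {p a b : ℝ} (hp : 0 ≤ p) (hb : 0 ≤ b) (hba : b ≤ a) :
    p * b ^ 3 + b ≤ p * a ^ 3 + a := by
  have : b ^ 3 ≤ a ^ 3 := pow_le_pow_left₀ hb hba 3
  nlinarith

lemma one_sub_pow_three_lt {a : ℝ} (ha₀ : 0 < a) (ha₁ : a < 1) : (1 - a) ^ 3 < 1 - a ^ 3 := by
  have : 1 - a ^ 3 - (1 - a) ^ 3 = 3 * a * (1 - a) := by ring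
  nlinarith [mul_pos ha₀ (sub_pos.2 ha₁)]

lemma sq_div_le_one_sub_sq_div {p a : ℝ} (hp : 0 ≤ p) (h : p * a ^ 3 + a ≤ 1 / 2) :
    a ^ 2 / (p * a ^ 2 + 1) ≤ (1 - a) ^ 2 / (p * a ^ 2 + p + 1) := by
  rw [div_le_div_iff₀ (by positivity) (by positivity)]
  have : (1 - a) ^ 2 * (p * a ^ 2 + 1) - a ^ 2 * (p * a ^ 2 + p + 1)
      = 1 - 2 * (p * a ^ 3 + a) := by ring
  linarith

lemma F3_neg_of_cubic_le {p a : ℝ} (hp : 0 ≤ p) (ha : 0 < a) (h : p * a ^ 3 + a ≤ 1 / 2) :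
    F3 a p < 0 := by
  have ha₁ : a < 1 := by nlinarith [mul_nonneg hp (pow_pos ha 3).le]
  have hsq : ((1 - a) ^ 3) ^ 2 < (a ^ 3 - 1) ^ 2 := by
    rw [← neg_sub 1 (a ^ 3), neg_sq]
    exact pow_lt_pow_left₀ (one_sub_pow_three_lt ha ha₁) (pow_pos (sub_pos.2 ha₁) 3).le two_ne_zero
  have hF : (a ^ 2 / (p * a ^ 2 + 1)) ^ 3 < (a ^ 3 - 1) ^ 2 / (p * a ^ 2 + p + 1) ^ 3 :=
    calc (a ^ 2 / (p * a ^ 2 + 1)) ^ 3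
        ≤ ((1 - a) ^ 2 / (p * a ^ 2 + p + 1)) ^ 3 :=
          pow_le_pow_left₀ (by positivity) (sq_div_le_one_sub_sq_div hp h) 3
      _ = ((1 - a) ^ 3) ^ 2 / (p * a ^ 2 + p + 1) ^ 3 := by rw [div_pow]; ring
      _ < (a ^ 3 - 1) ^ 2 / (p * a ^ 2 + p + 1) ^ 3 := by gcongr
  rw [F3]
  linarith

theorem T1_lt_T3_general (p : ℝ) (hp : 0 < p) (T₁ : ℝ)
    (hT₁ : p * T₁ ^ 3 + T₁ - 1 / 2 = 0) :
    (∀ a : ℝ, 0 < a → a < 1 → 0 < p * a ^ 3 + a - 1 / 2 → 0 < F3 a p → T₁ < a) ∧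
    (∀ T₃ : ℝ, 0 < T₃ → F3 T₃ p = 0 → T₁ < T₃) := by
  have below_T₁ : ∀ a, 0 < a → a ≤ T₁ → p * a ^ 3 + a ≤ 1 / 2 := fun a ha haT => by
    linarith [cubic_add_le_cubic_add hp.le ha.le haT]
  refine ⟨fun a ha _ hcubic _ => ?_, fun T₃ hT₃ hF => ?_⟩
  · by_contra! haT
    linarith [below_T₁ a ha haT]
  · by_contra! hT
    linarith [F3_neg_of_cubic_le hp.le hT₃ (below_T₁ T₃ hT₃ hT)]

/-- Ordering of thresholds `T₁(p) < T₃(p)`: if `T₁` is the positive root of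
`p a³ + a − 1/2` then any `a ∈ (0,1)` with `p a³ + a − 1/2 > 0` and `F₃(a,p) > 0`
satisfies `a > T₁`, and the unique positive root of `F₃(·,p)` is strictly
greater than `T₁(p)`. -/
theorem T1_lt_T3 (p : ℝ) (hp : 0 < p) (T₁ : ℝ) (hT₁pos : 0 < T₁)
    (hT₁ : p * T₁ ^ 3 + T₁ - 1 / 2 = 0) :
    (∀ a : ℝ, 0 < a → a < 1 → 0 < p * a ^ 3 + a - 1 / 2 → 0 < F3 a p → T₁ < a) ∧
    (∀ T₃ : ℝ, 0 < T₃ → F3 T₃ p = 0 → T₁ < T₃) :=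
  T1_lt_T3_general p hp T₁ hT₁
end
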